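/- (Total energy of a polytropic star.) Let γ ∈ (6/5, 2) with γ ≠ 1, K > 0, G > 0, R > 0. Let ρ : [0,R] → ℝ be continuous, continuously differentiable on (0,R), with ρ(r) > 0 for r ∈ [0,R) and ρ(R) = 0. Set p(r) = K·ρ(r)^γ, M(r) = ∫₀^r 4π s² ρ(s) ds and Mtot = M(R) > 0, and assume p'(r) = −G·M(r)·ρ(r)/r² on (0,R). Then the total energy E := ∫₀^R (p(r)/(γ−1))·4π r² dr − ∫₀^R G·M(r)·M'(r)/r dr satisfies E = −((3γ−4)/(5γ−6))·G·Mtot²/R. -/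

import Mathlib

/-!
Two integral identities, each obtained from the fundamental theorem of calculus, determine
`A = ∫ p dV` and `B = ∫ G M M' / r dr = -E_G`. Differentiating `4π r³ p` and using hydrostatic
equilibrium gives the virial relation `3A = B`. The enthalpy `h = γ/(γ-1) K ρ^(γ-1)` satisfies
`h' = p'/ρ = -G M / r²`, so `(h M - G M² / r)' = h M' - 2 G M M' / r`, whence
`γ/(γ-1) A - 2B = -G M(R)² / R`: `h` vanishes at the surface, and `M² / r → 0` at the centre
because `M = O(r)`. Solve this linear system for `A` and `B` and substitute into `E = A/(γ-1) - B`.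
-/

open Set intervalIntegral MeasureTheory Filter Topology Real

section Primitive

variable {g : ℝ → ℝ} {R : ℝ}

theorem continuousOn_integral_of_continuousOn_Icc (hR : 0 ≤ R) (hg : ContinuousOn g (Icc 0 R)) :
    ContinuousOn (fun r => ∫ s in (0 : ℝ)..r, g s) (Icc 0 R) := by
  rw [← uIcc_of_le hR] at hg ⊢
  exact continuousOn_primitive_interval (hg.integrableOn_compact isCompact_uIcc)

theorem hasDerivAt_integral_of_continuousOn_Icc (hg : ContinuousOn g (Icc 0 R)) {r : ℝ}
    (hr : r ∈ Ioo 0 R) : HasDerivAt (fun t => ∫ s in (0 : ℝ)..t, g s) (g r) r := by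
  have hsub : uIcc 0 r ⊆ Icc 0 R := by
    rw [uIcc_of_le hr.1.le]; exact Icc_subset_Icc_right hr.2.le
  exact integral_hasDerivAt_right (hg.mono hsub).intervalIntegrable
    ((hg.mono Ioo_subset_Icc_self).stronglyMeasurableAtFilter isOpen_Ioo r hr)
    (hg.continuousAt (Icc_mem_nhds hr.1 hr.2))

theorem tendsto_sq_integral_div_self (hg : ContinuousOn g (Icc 0 R)) :
    Tendsto (fun r => (∫ s in (0 : ℝ)..r, g s) ^ 2 / r) (𝓝[Icc 0 R] 0) (𝓝 0) := by
  obtain ⟨C, hC⟩ := isCompact_Icc.exists_bound_of_continuousOn hg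
  have hbound : ∀ r ∈ Icc 0 R, ‖(∫ s in (0 : ℝ)..r, g s) ^ 2 / r‖ ≤ C ^ 2 * r := by
    intro r hr
    have hint : |∫ s in (0 : ℝ)..r, g s| ≤ C * r := by
      simpa [abs_of_nonneg hr.1] using norm_integral_le_of_norm_le_const (a := 0) (b := r)
        fun x hx => hC x (by rw [uIoc_of_le hr.1] at hx; exact ⟨hx.1.le, hx.2.trans hr.2⟩)
    rcases hr.1.eq_or_lt with rfl | hr0
    · simp
    · rw [norm_div, norm_pow, Real.norm_of_nonneg hr0.le, div_le_iff₀ hr0]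
      calc ‖∫ s in (0 : ℝ)..r, g s‖ ^ 2 ≤ (C * r) ^ 2 := pow_le_pow_left₀ (norm_nonneg _) hint 2
        _ = C ^ 2 * r * r := by ring
  refine squeeze_zero_norm' (eventually_nhdsWithin_of_forall hbound) ?_
  simpa using (tendsto_id.mono_left (nhdsWithin_le_nhds (s := Icc 0 R) (a := 0))).const_mul (C ^ 2)

end Primitive

section Hydrostatic

variable {G R : ℝ} {ρ M : ℝ → ℝ}

-- At `r = 0` both sides vanish, the left one through `x / 0 = 0`.
theorem gravitational_integrand_eq :
    (fun r => G * M r * (4 * π * r ^ 2 * ρ r) / r) = fun r => 4 * π * G * r * M r * ρ r := by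
  funext r
  rcases eq_or_ne r 0 with rfl | hr
  · simp
  · field_simp

theorem intervalIntegrable_gravitational_integrand (hR : 0 ≤ R) (hρ : ContinuousOn ρ (Icc 0 R))
    (hM : ContinuousOn M (Icc 0 R)) :
    IntervalIntegrable (fun r => G * M r * (4 * π * r ^ 2 * ρ r) / r) volume 0 R := by
  rw [gravitational_integrand_eq]
  exact ContinuousOn.intervalIntegrable_of_Icc hR (by fun_prop)

theorem virial_identity {p : ℝ → ℝ} (hR : 0 ≤ R) (hρ : ContinuousOn ρ (Icc 0 R))
    (hM : ContinuousOn M (Icc 0 R)) (hp : ContinuousOn p (Icc 0 R)) (hpR : p R = 0)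
    (hp' : ∀ r ∈ Ioo 0 R, HasDerivAt p (-(G * M r * ρ r) / r ^ 2) r) :
    3 * ∫ r in (0 : ℝ)..R, p r * (4 * π * r ^ 2)
      = ∫ r in (0 : ℝ)..R, G * M r * (4 * π * r ^ 2 * ρ r) / r := by
  have hderiv : ∀ r ∈ Ioo 0 R, HasDerivAt (fun r => p r * (4 * π * r ^ 3))
      (3 * (p r * (4 * π * r ^ 2)) - G * M r * (4 * π * r ^ 2 * ρ r) / r) r := by
    intro r hr
    refine ((hp' r hr).mul ((hasDerivAt_pow 3 r).const_mul (4 * π))).congr_deriv ?_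
    have := hr.1.ne'
    field_simp
    ring
  have hint : IntervalIntegrable (fun r => p r * (4 * π * r ^ 2)) volume 0 R :=
    (hp.mul (by fun_prop)).intervalIntegrable_of_Icc hR
  have hftc := integral_eq_sub_of_hasDerivAt_of_le (f := fun r => p r * (4 * π * r ^ 3)) hR
    (hp.mul (by fun_prop)) hderiv
    ((hint.const_mul 3).sub (intervalIntegrable_gravitational_integrand hR hρ hM))
  rw [integral_sub (hint.const_mul 3) (intervalIntegrable_gravitational_integrand hR hρ hM),
    intervalIntegral.integral_const_mul, hpR] at hftc
  simpa [sub_eq_zero] using hftc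

theorem enthalpy_identity {h : ℝ → ℝ} (hR : 0 ≤ R) (hρ : ContinuousOn ρ (Icc 0 R))
    (hM : ∀ r, M r = ∫ s in (0 : ℝ)..r, 4 * π * s ^ 2 * ρ s)
    (hh : ContinuousOn h (Icc 0 R)) (hhR : h R = 0)
    (hh' : ∀ r ∈ Ioo 0 R, HasDerivAt h (-(G * M r) / r ^ 2) r) :
    (∫ r in (0 : ℝ)..R, h r * (4 * π * r ^ 2 * ρ r))
        - 2 * ∫ r in (0 : ℝ)..R, G * M r * (4 * π * r ^ 2 * ρ r) / r
      = -(G * M R ^ 2 / R) := by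
  have hdens : ContinuousOn (fun s => 4 * π * s ^ 2 * ρ s) (Icc 0 R) := by fun_prop
  have hMfun : M = fun r => ∫ s in (0 : ℝ)..r, 4 * π * s ^ 2 * ρ s := funext hM
  have hMcont : ContinuousOn M (Icc 0 R) :=
    hMfun ▸ continuousOn_integral_of_continuousOn_Icc hR hdens
  have hM0 : M 0 = 0 := by simp [hM]
  have hF : ContinuousOn (fun r => h r * M r - G * M r ^ 2 / r) (Icc 0 R) := by
    intro r hr
    rcases eq_or_ne r 0 with rfl | hr0
    · have hsing := tendsto_sq_integral_div_self hdens
      simp only [← hM] at hsing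
      replace hsing := hsing.const_mul G
      simpa [ContinuousWithinAt, hM0, mul_div_assoc] using
        ((hh 0 hr).mul (hMcont 0 hr)).tendsto.sub hsing
    · exact ((hh r hr).mul (hMcont r hr)).sub
        ((continuousWithinAt_const.mul ((hMcont r hr).pow 2)).div continuousWithinAt_id hr0)
  have hderiv : ∀ r ∈ Ioo 0 R, HasDerivAt (fun r => h r * M r - G * M r ^ 2 / r)
      (h r * (4 * π * r ^ 2 * ρ r) - 2 * (G * M r * (4 * π * r ^ 2 * ρ r) / r)) r := by
    intro r hr
    have hMr : HasDerivAt M (4 * π * r ^ 2 * ρ r) r :=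
      hMfun ▸ hasDerivAt_integral_of_continuousOn_Icc hdens hr
    refine (((hh' r hr).mul hMr).sub
      (((hMr.pow 2).const_mul G).div (hasDerivAt_id r) hr.1.ne')).congr_deriv ?_
    have := hr.1.ne'
    simp only [id, Pi.pow_apply]
    field_simp
    ring
  have hint₁ : IntervalIntegrable (fun r => h r * (4 * π * r ^ 2 * ρ r)) volume 0 R :=
    (hh.mul hdens).intervalIntegrable_of_Icc hR
  have hint₂ := (intervalIntegrable_gravitational_integrand (G := G) hR hρ hMcont).const_mul 2
  have hftc := integral_eq_sub_of_hasDerivAt_of_le hR hF hderiv (hint₁.sub hint₂)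
  rw [integral_sub hint₁ hint₂, intervalIntegral.integral_const_mul] at hftc
  simpa [hhR, hM0] using hftc

end Hydrostatic

section Polytrope

variable {γ K G R : ℝ} {ρ ρ' M : ℝ → ℝ}

theorem hasDerivAt_polytropic_enthalpy {q r : ℝ} (hγ : γ ≠ 1) (hρr : 0 < ρ r)
    (hρ' : HasDerivAt ρ (ρ' r) r) (hp : HasDerivAt (fun s => K * ρ s ^ γ) q r) :
    HasDerivAt (fun s => γ / (γ - 1) * K * ρ s ^ (γ - 1)) (q / ρ r) r := by
  have hq : q = K * (ρ' r * γ * ρ r ^ (γ - 1)) :=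
    hp.unique ((hρ'.rpow_const (Or.inl hρr.ne')).const_mul K)
  refine ((hρ'.rpow_const (p := γ - 1) (Or.inl hρr.ne')).const_mul _).congr_deriv ?_
  have : γ - 1 ≠ 0 := sub_ne_zero.mpr hγ
  rw [hq, Real.rpow_sub_one hρr.ne' (γ - 1)]
  field_simp

theorem polytropic_enthalpy_identity (hγ : 1 < γ) (hR : 0 ≤ R)
    (hρ : ContinuousOn ρ (Icc 0 R)) (hρ' : ∀ r ∈ Ioo 0 R, HasDerivAt ρ (ρ' r) r)
    (hρ_pos : ∀ r ∈ Ico 0 R, 0 < ρ r) (hρR : ρ R = 0)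
    (hM : ∀ r, M r = ∫ s in (0 : ℝ)..r, 4 * π * s ^ 2 * ρ s)
    (hp' : ∀ r ∈ Ioo 0 R, HasDerivAt (fun s => K * ρ s ^ γ) (-(G * M r * ρ r) / r ^ 2) r) :
    γ / (γ - 1) * (∫ r in (0 : ℝ)..R, K * ρ r ^ γ * (4 * π * r ^ 2))
        - 2 * ∫ r in (0 : ℝ)..R, G * M r * (4 * π * r ^ 2 * ρ r) / r
      = -(G * M R ^ 2 / R) := by
  have hh' : ∀ r ∈ Ioo 0 R, HasDerivAt (fun s => γ / (γ - 1) * K * ρ s ^ (γ - 1))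
      (-(G * M r) / r ^ 2) r := fun r hr => by
    have hρr := hρ_pos r ⟨hr.1.le, hr.2⟩
    refine (hasDerivAt_polytropic_enthalpy hγ.ne' hρr (hρ' r hr) (hp' r hr)).congr_deriv ?_
    field_simp
  have hh_mul : ∫ r in (0 : ℝ)..R, γ / (γ - 1) * K * ρ r ^ (γ - 1) * (4 * π * r ^ 2 * ρ r)
      = γ / (γ - 1) * ∫ r in (0 : ℝ)..R, K * ρ r ^ γ * (4 * π * r ^ 2) := by
    rw [← intervalIntegral.integral_const_mul]
    refine integral_congr fun r hr => ?_
    rw [uIcc_of_le hR] at hr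
    have hρr : 0 ≤ ρ r :=
      hr.2.eq_or_lt.elim (fun h => h ▸ hρR.ge) fun h => (hρ_pos r ⟨hr.1, h⟩).le
    have hpow := Real.rpow_add_one' hρr (y := γ - 1) (by simp; linarith)
    rw [sub_add_cancel] at hpow
    simp only [hpow]
    ring
  rw [← hh_mul]
  exact enthalpy_identity hR hρ hM
    (((Real.continuous_rpow_const (by linarith)).comp_continuousOn hρ).const_mul _)
    (by simp [hρR, Real.zero_rpow (sub_ne_zero.mpr hγ.ne')]) hh'

end Polytrope

theorem stmt9_general (γ K G R : ℝ) (hγ : γ ∈ Ioo (6 / 5 : ℝ) 2) (hR : 0 < R)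
    (ρ ρ' : ℝ → ℝ)
    (hρ_cont : ContinuousOn ρ (Icc 0 R))
    (hρ_deriv : ∀ r ∈ Ioo (0 : ℝ) R, HasDerivAt ρ (ρ' r) r)
    (hρ_pos : ∀ r ∈ Ico (0 : ℝ) R, 0 < ρ r) (hρR : ρ R = 0)
    (M : ℝ → ℝ)
    (hM : ∀ r, M r = ∫ s in (0 : ℝ)..r, 4 * Real.pi * s ^ 2 * ρ s)
    (hp_deriv : ∀ r ∈ Ioo (0 : ℝ) R,
      HasDerivAt (fun s => K * ρ s ^ γ) (-(G * M r * ρ r) / r ^ 2) r) :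
    (∫ r in (0 : ℝ)..R, (K * ρ r ^ γ / (γ - 1)) * (4 * Real.pi * r ^ 2))
        - (∫ r in (0 : ℝ)..R, G * M r * (4 * Real.pi * r ^ 2 * ρ r) / r)
      = -((3 * γ - 4) / (5 * γ - 6)) * G * (M R) ^ 2 / R := by
  obtain ⟨hγ₀, -⟩ := hγ
  have hγ₁ : 1 < γ := by linarith
  have virial := virial_identity (p := fun r => K * ρ r ^ γ) hR.le hρ_cont
    (funext hM ▸ continuousOn_integral_of_continuousOn_Icc hR.le (by fun_prop))
    (((Real.continuous_rpow_const (by linarith)).comp_continuousOn hρ_cont).const_mul K)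
    (by simp [hρR, Real.zero_rpow (by linarith : γ ≠ 0)]) hp_deriv
  have enthalpy := polytropic_enthalpy_identity hγ₁ hR.le hρ_cont hρ_deriv hρ_pos hρR hM hp_deriv
  simp only [div_mul_eq_mul_div _ (γ - 1), intervalIntegral.integral_div, ← virial] at enthalpy ⊢
  generalize ∫ r in (0 : ℝ)..R, K * ρ r ^ γ * (4 * π * r ^ 2) = A at enthalpy ⊢
  have hγ_sub : γ - 1 ≠ 0 := by linarith
  have h5 : γ * 5 - 6 ≠ 0 := by linarith
  field_simp at enthalpy ⊢
  linear_combination (3 * γ - 4) * enthalpy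

/-- Total energy of a polytropic star `p = K·ρ^γ`, `γ ∈ (6/5, 2)`:
`E = E_T + E_G = −((3γ−4)/(5γ−6))·G·Mtot²/R`, where
`E_T = ∫₀^R (p/(γ−1))·4πr² dr` and `E_G = −∫₀^R G·M·M'/r dr`. -/
theorem stmt9 (γ K G R : ℝ) (hγ : γ ∈ Ioo (6 / 5 : ℝ) 2) (hγ1 : γ ≠ 1) (hK : 0 < K)
    (hG : 0 < G) (hR : 0 < R)
    (ρ ρ' : ℝ → ℝ)
    (hρ_cont : ContinuousOn ρ (Icc 0 R))
    (hρ_deriv : ∀ r ∈ Ioo (0 : ℝ) R, HasDerivAt ρ (ρ' r) r)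
    (hρ'_cont : ContinuousOn ρ' (Ioo 0 R))
    (hρ_pos : ∀ r ∈ Ico (0 : ℝ) R, 0 < ρ r) (hρR : ρ R = 0)
    (M : ℝ → ℝ)
    (hM : ∀ r, M r = ∫ s in (0 : ℝ)..r, 4 * Real.pi * s ^ 2 * ρ s)
    (hMtot : 0 < M R)
    (hp_deriv : ∀ r ∈ Ioo (0 : ℝ) R,
      HasDerivAt (fun s => K * ρ s ^ γ) (-(G * M r * ρ r) / r ^ 2) r) :
    (∫ r in (0 : ℝ)..R, (K * ρ r ^ γ / (γ - 1)) * (4 * Real.pi * r ^ 2))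
        - (∫ r in (0 : ℝ)..R, G * M r * (4 * Real.pi * r ^ 2 * ρ r) / r)
      = -((3 * γ - 4) / (5 * γ - 6)) * G * (M R) ^ 2 / R :=
  stmt9_general γ K G R hγ hR ρ ρ' hρ_cont hρ_deriv hρ_pos hρR M hM hp_deriv
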